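/- arXiv:1709.00792 — 3 statements merged into one kernel-verified Lean document; each statement's English description precedes it below -/
import Mathlib

section
/- Let G and G' be finite simple graphs whose A_α matrices have the same characteristic polynomial for some real α with 0 ≤ α ≤ 1. If G is r-regular (every vertex of G has degree r), then G' is also r-regular. -/
open SimpleGraph Matrix Finset

attribute [local instance] Classical.propDecidable

/-- The matrix `A_α(G) = α·D(G) + (1-α)·A(G)` of a finite simple graph `G`,
where `D(G)` is the diagonal matrix of vertex degrees and `A(G)` is the
adjacency matrix over `ℝ`. -/
noncomputable def Aalpha {V : Type} [Fintype V] (G : SimpleGraph V) (α : ℝ) :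
    Matrix V V ℝ :=
  α • Matrix.diagonal (fun v => (G.degree v : ℝ)) + (1 - α) • G.adjMatrix ℝ

/-- `G` is determined by its `A_α`-spectrum: every finite simple graph whose
`A_α` matrix has the same characteristic polynomial as that of `G` is
isomorphic to `G`. -/
def IsDSAalpha {V : Type} [Fintype V] (G : SimpleGraph V) (α : ℝ) : Prop :=
  ∀ (W : Type) [Fintype W] (H : SimpleGraph W),
    (Aalpha H α).charpoly = (Aalpha G α).charpoly → Nonempty (H ≃g G)

/-- The largest eigenvalue of a matrix: the supremum of the (real) roots of its
characteristic polynomial.  For a real symmetric matrix these roots are exactly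
its eigenvalues. -/
noncomputable def lambda1 {V : Type} [Fintype V] (M : Matrix V V ℝ) : ℝ :=
  sSup {x : ℝ | M.charpoly.IsRoot x}

/-- The join `G ∨ H` of two graphs: their disjoint union together with all
edges joining a vertex of `G` to a vertex of `H`. -/
def joinG {V W : Type} (G : SimpleGraph V) (H : SimpleGraph W) :
    SimpleGraph (V ⊕ W) :=
  (G ⊕g H) ⊔ completeBipartiteGraph V W

/-- The `M`-coronal `Γ_M(x) = 1ᵀ (xI − M)⁻¹ 1`: the sum of all entries of
`(xI − M)⁻¹`. -/
noncomputable def coronal {V : Type} [Fintype V] (M : Matrix V V ℝ) (x : ℝ) : ℝ :=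
  ∑ i, ∑ j, (x • (1 : Matrix V V ℝ) - M)⁻¹ i j

/-- Disjoint union of a family of graphs: two vertices are adjacent iff they lie
in the same summand and are adjacent there. -/
def sigmaGraph {ι : Type} {F : ι → Type} (G : ∀ i, SimpleGraph (F i)) :
    SimpleGraph (Σ i, F i) :=
  SimpleGraph.fromRel (fun x y => ∃ h : x.1 = y.1, (G y.1).Adj (h ▸ x.2) y.2)

open Polynomial
open scoped MatrixOrder

/-! For an `r`-regular graph `G`, `r • 1 - A_α(G) = (1 - α) • L(G)` with `L` the Laplacian, so
`A_α(G) ≤ r • 1` in the Loewner order when `α ≤ 1`. This bound only depends on the spectrum, so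
it passes to the cospectral `G'`. Cospectral graphs also have the same order and the same degree
sum (read off `tr A_α`, or `tr A_0²` when `α = 0`), namely `n r`. Hence the quadratic form of the
positive semidefinite matrix `r • 1 - A_α(G')` vanishes at the all-ones vector, which therefore
lies in its kernel; as the row sums of `A_α(G')` are the degrees of `G'`, every degree is `r`. -/

namespace Matrix

variable {m n : Type} [Fintype m] [Fintype n] [DecidableEq m] [DecidableEq n]

theorem spectrum_eq_of_charpoly_eq {K : Type*} [Field K] {A : Matrix m m K} {B : Matrix n n K}
    (h : A.charpoly = B.charpoly) : spectrum K A = spectrum K B := by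
  ext x
  rw [mem_spectrum_iff_isRoot_charpoly, mem_spectrum_iff_isRoot_charpoly, h]

namespace IsHermitian

variable {𝕜 : Type*} [RCLike 𝕜] {A : Matrix m m 𝕜} {B : Matrix n n 𝕜}

theorem charpoly_cfc_eq_map_roots (hA : A.IsHermitian) (f : ℝ → ℝ) :
    (cfc f A).charpoly = (A.charpoly.roots.map fun x => X - C (f (RCLike.re x) : 𝕜)).prod := by
  rw [hA.charpoly_cfc_eq, hA.roots_charpoly_eq_eigenvalues, Multiset.map_map,
    Finset.prod_eq_multiset_prod]
  simp [Function.comp_def]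

theorem charpoly_cfc_eq_of_charpoly_eq (hA : A.IsHermitian) (hB : B.IsHermitian)
    (h : A.charpoly = B.charpoly) (f : ℝ → ℝ) : (cfc f A).charpoly = (cfc f B).charpoly := by
  rw [hA.charpoly_cfc_eq_map_roots, hB.charpoly_cfc_eq_map_roots, h]

theorem trace_mul_self_eq_of_charpoly_eq (hA : A.IsHermitian) (hB : B.IsHermitian)
    (h : A.charpoly = B.charpoly) : (A * A).trace = (B * B).trace := by
  have hA' : IsSelfAdjoint A := hA
  have hB' : IsSelfAdjoint B := hB
  rw [trace_eq_neg_charpoly_nextCoeff, trace_eq_neg_charpoly_nextCoeff, ← pow_two, ← pow_two,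
    ← cfc_pow_id (R := ℝ) A 2, ← cfc_pow_id (R := ℝ) B 2, hA.charpoly_cfc_eq_of_charpoly_eq hB h]

theorem le_smul_one_of_charpoly_eq (hA : A.IsHermitian) (hB : B.IsHermitian)
    (h : A.charpoly = B.charpoly) {c : ℝ} (hc : A ≤ c • 1) : B ≤ c • 1 := by
  have hA' : IsSelfAdjoint A := hA
  have hB' : IsSelfAdjoint B := hB
  rw [← Algebra.algebraMap_eq_smul_one, le_algebraMap_iff_spectrum_le] at hc ⊢
  rwa [← spectrum.preimage_algebraMap 𝕜, ← spectrum_eq_of_charpoly_eq h,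
    spectrum.preimage_algebraMap]

end IsHermitian

end Matrix

section Aalpha

variable {V : Type} [Fintype V]

theorem Aalpha_eq_degMatrix_sub_smul_lapMatrix (G : SimpleGraph V) (α : ℝ) :
    Aalpha G α = G.degMatrix ℝ - (1 - α) • G.lapMatrix ℝ := by
  rw [Aalpha, lapMatrix, degMatrix]
  module

theorem Aalpha_isHermitian (G : SimpleGraph V) (α : ℝ) : (Aalpha G α).IsHermitian := by
  rw [Aalpha_eq_degMatrix_sub_smul_lapMatrix]
  exact (G.isHermitian_degMatrix ℝ).sub ((G.isHermitian_lapMatrix ℝ).smul (.all _))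

theorem Aalpha_mulVec_one (G : SimpleGraph V) (α : ℝ) :
    Aalpha G α *ᵥ (fun _ => 1) = fun v => (G.degree v : ℝ) := by
  ext v
  rw [Aalpha_eq_degMatrix_sub_smul_lapMatrix, sub_mulVec, smul_mulVec,
    lapMatrix_mulVec_const_eq_zero, smul_zero, sub_zero, degMatrix_mulVec_apply, mul_one]

theorem trace_Aalpha (G : SimpleGraph V) (α : ℝ) :
    (Aalpha G α).trace = α * ∑ v, (G.degree v : ℝ) := by
  rw [Aalpha, trace_add, trace_smul, trace_smul, trace_diagonal, trace_adjMatrix, smul_zero,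
    add_zero, smul_eq_mul]

theorem trace_Aalpha_zero_mul_self (G : SimpleGraph V) :
    (Aalpha G 0 * Aalpha G 0).trace = ∑ v, (G.degree v : ℝ) := by
  simp only [Aalpha, zero_smul, sub_zero, one_smul, zero_add]
  exact Finset.sum_congr rfl fun v _ => G.adjMatrix_mul_self_apply_self v

theorem sum_degree_eq_of_Aalpha_charpoly_eq {W : Type} [Fintype W] {G : SimpleGraph V}
    {G' : SimpleGraph W} {α : ℝ} (h : (Aalpha G α).charpoly = (Aalpha G' α).charpoly) :
    ∑ v, (G.degree v : ℝ) = ∑ w, (G'.degree w : ℝ) := by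
  rcases eq_or_ne α 0 with rfl | hα
  · rw [← trace_Aalpha_zero_mul_self, ← trace_Aalpha_zero_mul_self,
      (Aalpha_isHermitian G 0).trace_mul_self_eq_of_charpoly_eq (Aalpha_isHermitian G' 0) h]
  · have htrace : (Aalpha G α).trace = (Aalpha G' α).trace := by
      rw [trace_eq_neg_charpoly_nextCoeff, trace_eq_neg_charpoly_nextCoeff, h]
    rw [trace_Aalpha, trace_Aalpha] at htrace
    exact mul_left_cancel₀ hα htrace

theorem smul_one_sub_Aalpha_of_isRegularOfDegree {G : SimpleGraph V} {r : ℕ}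
    (hreg : G.IsRegularOfDegree r) (α : ℝ) :
    (r : ℝ) • 1 - Aalpha G α = (1 - α) • G.lapMatrix ℝ := by
  have hdeg : G.degMatrix ℝ = (r : ℝ) • 1 := by
    rw [degMatrix, smul_one_eq_diagonal]
    exact congrArg diagonal (funext fun v => by rw [hreg v])
  rw [Aalpha_eq_degMatrix_sub_smul_lapMatrix, hdeg, sub_sub_cancel]

theorem Aalpha_le_of_isRegularOfDegree {G : SimpleGraph V} {r : ℕ}
    (hreg : G.IsRegularOfDegree r) {α : ℝ} (hα : α ≤ 1) : Aalpha G α ≤ (r : ℝ) • 1 := by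
  rw [le_iff, smul_one_sub_Aalpha_of_isRegularOfDegree hreg]
  exact (G.posSemidef_lapMatrix ℝ).smul (sub_nonneg.mpr hα)

theorem isRegularOfDegree_of_Aalpha_le {G : SimpleGraph V} {α : ℝ} {r : ℕ}
    (hle : Aalpha G α ≤ (r : ℝ) • 1)
    (hsum : ∑ v, (G.degree v : ℝ) = Fintype.card V * r) : G.IsRegularOfDegree r := by
  have hquad : star (fun _ => 1) ⬝ᵥ ((r : ℝ) • 1 - Aalpha G α) *ᵥ (fun _ => 1) = 0 := by
    simp [sub_mulVec, smul_mulVec, Aalpha_mulVec_one, dotProduct, Finset.sum_sub_distrib, hsum]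
  have hkernel := ((le_iff.mp hle).dotProduct_mulVec_zero_iff _).mp hquad
  intro v
  have hv := congrFun hkernel v
  simp only [sub_mulVec, smul_mulVec, one_mulVec, Aalpha_mulVec_one, Pi.sub_apply, Pi.smul_apply,
    smul_eq_mul, mul_one, Pi.zero_apply] at hv
  exact_mod_cast (sub_eq_zero.mp hv).symm

end Aalpha

theorem regular_of_Aalpha_cospectral_regular_general
    {V W : Type} [Fintype V] [Fintype W]
    (G : SimpleGraph V) (G' : SimpleGraph W)
    (α : ℝ) (hα1 : α ≤ 1)
    (h : (Aalpha G α).charpoly = (Aalpha G' α).charpoly)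
    (r : ℕ) (hreg : G.IsRegularOfDegree r) :
    G'.IsRegularOfDegree r := by
  have hle : Aalpha G' α ≤ (r : ℝ) • 1 :=
    (Aalpha_isHermitian G α).le_smul_one_of_charpoly_eq (Aalpha_isHermitian G' α) h
      (Aalpha_le_of_isRegularOfDegree hreg hα1)
  have hcard : Fintype.card V = Fintype.card W := by
    simpa using congrArg natDegree h
  refine isRegularOfDegree_of_Aalpha_le hle ?_
  rw [← sum_degree_eq_of_Aalpha_charpoly_eq h, ← hcard]
  simp [hreg _]

theorem regular_of_Aalpha_cospectral_regular
    {V W : Type} [Fintype V] [Fintype W]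
    (G : SimpleGraph V) (G' : SimpleGraph W)
    (α : ℝ) (hα0 : 0 ≤ α) (hα1 : α ≤ 1)
    (h : (Aalpha G α).charpoly = (Aalpha G' α).charpoly)
    (r : ℕ) (hreg : G.IsRegularOfDegree r) :
    G'.IsRegularOfDegree r :=
  regular_of_Aalpha_cospectral_regular_general G G' α hα1 h r hreg
end

section
/- For every real α with 0 ≤ α < 1 and every n ≥ 1, the path P_n is determined by its A_α-spectrum: every finite simple graph whose A_α matrix has the same characteristic polynomial as that of P_n is isomorphic to P_n. -/
open SimpleGraph Matrix Finset

attribute [local instance] Classical.propDecidable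

/-!
Cospectral Hermitian matrices have the same traces of powers, and the first traces of `A_α(G)`
are `tr A_α = α Σ d` and `tr A_α² = α² Σ d² + (1 - α)² Σ d`. Hence a graph `H` with `n`
vertices that is `A_α`-cospectral with `P_n` has degree sum `2n - 2`, and, when `α ≠ 0`, also
`Σ d² = 4n - 6`. When `α = 0` one uses `tr A⁴ = 2 Σ d² - Σ d + (a nonnegative term that
vanishes for graphs without 4-cycles)`, which gives `Σ d² ≤ 4n - 6`. Then `Σ (d - 1)(d - 2) ≤ 0`
forces all degrees to be 1 or 2, with exactly two vertices of degree 1.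

Such a graph is a path joining its two leaves together with disjoint cycles. A cycle would make
`2` an `A_α`-eigenvalue of `H` (its indicator vector is an eigenvector), but `2` is not an
`A_α`-eigenvalue of `P_n` when `α < 1`: at a positive maximum of an eigenvector, the eigenvalue
equation forces degree 2 and the same value at every neighbour, and connectivity carries this
to an end vertex of `P_n`, which has degree 1.
-/

open Polynomial

namespace Matrix

variable {n : Type} [Fintype n]

theorem isRoot_charpoly_iff_exists_mulVec_eq_smul {K : Type} [Field K] (M : Matrix n n K) (t : K) :
    M.charpoly.IsRoot t ↔ ∃ x ≠ 0, M *ᵥ x = t • x := by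
  rw [IsRoot, eval_charpoly, ← exists_mulVec_eq_zero_iff]
  simp only [scalar_apply, ← smul_one_eq_diagonal, sub_mulVec, smul_mulVec, one_mulVec,
    sub_eq_zero, eq_comm]

theorem IsHermitian.trace_pow_eq_sum_roots {𝕜 : Type} [RCLike 𝕜] {A : Matrix n n 𝕜}
    (hA : A.IsHermitian) (k : ℕ) : (A ^ k).trace = (A.charpoly.roots.map (· ^ k)).sum := by
  rw [trace_eq_sum_roots_charpoly_of_splits (hA.pow k).splits_charpoly,
    ← cfc_pow_id (R := ℝ) A k hA.isSelfAdjoint, hA.charpoly_cfc_eq,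
    hA.roots_charpoly_eq_eigenvalues,
    roots_prod _ _ (prod_ne_zero_iff.mpr fun i _ => X_sub_C_ne_zero _)]
  simp [Multiset.map_map, -map_pow, RCLike.ofReal_pow]

theorem IsHermitian.trace_pow_eq_of_charpoly_eq {𝕜 : Type} [RCLike 𝕜] {m : Type} [Fintype m]
    {A : Matrix n n 𝕜} {B : Matrix m m 𝕜} (hA : A.IsHermitian) (hB : B.IsHermitian)
    (h : A.charpoly = B.charpoly) (k : ℕ) : (A ^ k).trace = (B ^ k).trace := by
  rw [hA.trace_pow_eq_sum_roots, hB.trace_pow_eq_sum_roots, h]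

end Matrix

namespace SimpleGraph

theorem Reachable.mem_of_forall_adj_mem {V : Type} {G : SimpleGraph V} {s : Set V}
    (hs : ∀ v ∈ s, ∀ w, G.Adj v w → w ∈ s) {u v : V} (huv : G.Reachable u v) (hu : u ∈ s) :
    v ∈ s := by
  obtain ⟨p⟩ := huv
  induction p with
  | nil => exact hu
  | cons h _ ih => exact ih (hs _ hu _ h)

section Fintype

variable {V : Type} [Fintype V] (G : SimpleGraph V)

theorem sum_adjMatrix_apply (v : V) : ∑ w, G.adjMatrix ℝ v w = G.degree v := by
  simp [adjMatrix_apply, ← card_neighborFinset_eq_degree, neighborFinset_eq_filter]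

theorem sum_adjMatrix_apply' (v : V) : ∑ w, G.adjMatrix ℝ w v = G.degree v := by
  simp only [G.isSymm_adjMatrix.apply v, sum_adjMatrix_apply]

theorem adjMatrix_mul_self_apply (i j : V) :
    (G.adjMatrix ℝ * G.adjMatrix ℝ) i j = #{k | G.Adj i k ∧ G.Adj k j} := by
  simp only [mul_apply, adjMatrix_apply, boole_mul, ← ite_and, sum_boole]

theorem sum_sum_adjMatrix_mul_self_apply :
    ∑ i, ∑ j, (G.adjMatrix ℝ * G.adjMatrix ℝ) i j = ∑ v, (G.degree v : ℝ) ^ 2 := by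
  set A := G.adjMatrix ℝ
  calc ∑ i, ∑ j, (A * A) i j = ∑ i, ∑ k, A i k * ∑ j, A k j := by
        simp only [mul_apply, mul_sum]
        exact sum_congr rfl fun _ _ => sum_comm
    _ = ∑ k, (∑ i, A i k) * ∑ j, A k j := by simp only [sum_mul]; exact sum_comm
    _ = ∑ v, (G.degree v : ℝ) ^ 2 := by simp only [A, sum_adjMatrix_apply, sum_adjMatrix_apply', sq]

/-- The last sum is eight times the number of 4-cycles of `G`. -/
theorem trace_adjMatrix_pow_four : (G.adjMatrix ℝ ^ 4).trace = 2 * ∑ v, (G.degree v : ℝ) ^ 2 -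
    ∑ v, (G.degree v : ℝ) + ∑ i, ∑ j ∈ univ.erase i,
      ((G.adjMatrix ℝ * G.adjMatrix ℝ) i j ^ 2 - (G.adjMatrix ℝ * G.adjMatrix ℝ) i j) := by
  have hsymm (i j : V) :
      (G.adjMatrix ℝ * G.adjMatrix ℝ) j i = (G.adjMatrix ℝ * G.adjMatrix ℝ) i j := by
    simpa [sq] using ((G.isSymm_adjMatrix (α := ℝ)).pow 2).apply i j
  have h4 : (G.adjMatrix ℝ ^ 4).trace = ∑ i, ∑ j, (G.adjMatrix ℝ * G.adjMatrix ℝ) i j ^ 2 := by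
    rw [show 4 = 2 + 2 from rfl, pow_add, sq, trace]
    refine sum_congr rfl fun i _ => ?_
    rw [diag_apply, mul_apply]
    exact sum_congr rfl fun j _ => by rw [hsymm, sq]
  have hsum := G.sum_sum_adjMatrix_mul_self_apply
  set B := G.adjMatrix ℝ * G.adjMatrix ℝ
  have hdiag (i : V) : B i i = G.degree i := adjMatrix_mul_self_apply_self G i
  calc (G.adjMatrix ℝ ^ 4).trace = ∑ i, ∑ j, B i j ^ 2 := h4
    _ = ∑ i, ∑ j, B i j + ∑ i, ∑ j, (B i j ^ 2 - B i j) := by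
        simp only [← sum_add_distrib, add_sub_cancel]
    _ = ∑ v, (G.degree v : ℝ) ^ 2 + ∑ i, ((G.degree i : ℝ) ^ 2 - G.degree i) +
          ∑ i, ∑ j ∈ univ.erase i, (B i j ^ 2 - B i j) := by
        rw [hsum, add_assoc]
        congr 1
        rw [← sum_add_distrib]
        refine sum_congr rfl fun i _ => ?_
        rw [← add_sum_erase _ _ (mem_univ i), hdiag]
    _ = _ := by rw [sum_sub_distrib]; ring

theorem two_mul_sum_degree_sq_sub_sum_degree_le_trace_adjMatrix_pow_four :
    2 * ∑ v, (G.degree v : ℝ) ^ 2 - ∑ v, (G.degree v : ℝ) ≤ (G.adjMatrix ℝ ^ 4).trace := by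
  rw [trace_adjMatrix_pow_four, le_add_iff_nonneg_right]
  refine sum_nonneg fun i _ => sum_nonneg fun j _ => ?_
  rw [adjMatrix_mul_self_apply, sub_nonneg]
  exact_mod_cast Nat.le_self_pow two_ne_zero _

theorem trace_adjMatrix_pow_four_of_mul_self_apply_le_one
    (h : ∀ i j, i ≠ j → (G.adjMatrix ℝ * G.adjMatrix ℝ) i j ≤ 1) :
    (G.adjMatrix ℝ ^ 4).trace = 2 * ∑ v, (G.degree v : ℝ) ^ 2 - ∑ v, (G.degree v : ℝ) := by
  rw [trace_adjMatrix_pow_four, add_eq_left]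
  refine sum_eq_zero fun i _ => sum_eq_zero fun j hj => ?_
  have hij := h i j (ne_of_mem_erase hj).symm
  rw [adjMatrix_mul_self_apply, Nat.cast_le_one] at hij
  rw [adjMatrix_mul_self_apply]
  interval_cases #{k | G.Adj i k ∧ G.Adj k j} <;> simp

theorem isHermitian_Aalpha (α : ℝ) : (Aalpha G α).IsHermitian := by
  simp [Aalpha, Matrix.IsHermitian]

theorem Aalpha_zero : Aalpha G 0 = G.adjMatrix ℝ := by simp [Aalpha]

theorem Aalpha_mulVec_apply (α : ℝ) (x : V → ℝ) (v : V) :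
    (Aalpha G α *ᵥ x) v = α * G.degree v * x v + (1 - α) * ∑ w ∈ G.neighborFinset v, x w := by
  simp [Aalpha, add_mulVec, smul_mulVec, mulVec_diagonal, adjMatrix_mulVec_apply, mul_assoc]

theorem trace_Aalpha (α : ℝ) : (Aalpha G α).trace = α * ∑ v, (G.degree v : ℝ) := by
  simp [Aalpha]

theorem trace_Aalpha_sq (α : ℝ) : (Aalpha G α ^ 2).trace =
    α ^ 2 * ∑ v, (G.degree v : ℝ) ^ 2 + (1 - α) ^ 2 * ∑ v, (G.degree v : ℝ) := by
  rw [Aalpha]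
  set D := diagonal fun v => (G.degree v : ℝ)
  set A := G.adjMatrix ℝ
  have hDA : (D * A).trace = 0 := by
    simp only [trace, diag_apply, D, A, diagonal_mul, adjMatrix_apply, G.irrefl, if_false,
      mul_zero, sum_const_zero]
  have hAD : (A * D).trace = 0 := by rw [trace_mul_comm, hDA]
  have hDD : (D * D).trace = ∑ v, (G.degree v : ℝ) ^ 2 := by simp [D, sq]
  have hAA : (A * A).trace = ∑ v, (G.degree v : ℝ) := by
    simp only [trace, diag_apply, A, adjMatrix_mul_self_apply_self]
  simp only [sq, add_mul, mul_add, smul_mul_smul_comm, trace_add, trace_smul, hDA, hAD, hDD, hAA,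
    smul_eq_mul]
  ring

variable {α : ℝ}

theorem sum_degree_eq_of_charpoly_Aalpha_eq {W : Type} [Fintype W] {H : SimpleGraph W}
    (h : (Aalpha H α).charpoly = (Aalpha G α).charpoly) :
    ∑ w, (H.degree w : ℝ) = ∑ v, (G.degree v : ℝ) := by
  have htr := (isHermitian_Aalpha H α).trace_pow_eq_of_charpoly_eq (isHermitian_Aalpha G α) h
  by_cases hα0 : α = 0
  · have h2 := htr 2
    simpa [trace_Aalpha_sq, hα0] using h2
  · have h1 := htr 1
    simp only [pow_one, trace_Aalpha] at h1
    exact mul_left_cancel₀ hα0 h1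

theorem sum_degree_sq_eq_of_charpoly_Aalpha_eq {W : Type} [Fintype W] {H : SimpleGraph W}
    (hα : α ≠ 0) (h : (Aalpha H α).charpoly = (Aalpha G α).charpoly) :
    ∑ w, (H.degree w : ℝ) ^ 2 = ∑ v, (G.degree v : ℝ) ^ 2 := by
  have htr := (isHermitian_Aalpha H α).trace_pow_eq_of_charpoly_eq (isHermitian_Aalpha G α) h
  have h1 := htr 1
  have h2 := htr 2
  simp only [pow_one, trace_Aalpha] at h1
  rw [trace_Aalpha_sq, trace_Aalpha_sq, mul_left_cancel₀ hα h1, add_left_inj] at h2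
  exact mul_left_cancel₀ (pow_ne_zero 2 hα) h2

theorem sum_degree_sq_le_of_charpoly_adjMatrix_eq {W : Type} [Fintype W] {H : SimpleGraph W}
    (h : (H.adjMatrix ℝ).charpoly = (G.adjMatrix ℝ).charpoly)
    (hG : ∀ i j, i ≠ j → (G.adjMatrix ℝ * G.adjMatrix ℝ) i j ≤ 1) :
    ∑ w, (H.degree w : ℝ) ^ 2 ≤ ∑ v, (G.degree v : ℝ) ^ 2 := by
  rw [← Aalpha_zero, ← Aalpha_zero] at h
  have h4 := (isHermitian_Aalpha H 0).trace_pow_eq_of_charpoly_eq (isHermitian_Aalpha G 0) h 4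
  have hsum := G.sum_degree_eq_of_charpoly_Aalpha_eq h
  rw [Aalpha_zero, Aalpha_zero, G.trace_adjMatrix_pow_four_of_mul_self_apply_le_one hG] at h4
  linarith [H.two_mul_sum_degree_sq_sub_sum_degree_le_trace_adjMatrix_pow_four]

theorem sum_degree_sq_le_of_charpoly_Aalpha_eq {W : Type} [Fintype W] {H : SimpleGraph W}
    (h : (Aalpha H α).charpoly = (Aalpha G α).charpoly)
    (hG : ∀ i j, i ≠ j → (G.adjMatrix ℝ * G.adjMatrix ℝ) i j ≤ 1) :
    ∑ w, (H.degree w : ℝ) ^ 2 ≤ ∑ v, (G.degree v : ℝ) ^ 2 := by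
  by_cases hα : α = 0
  · rw [hα, Aalpha_zero, Aalpha_zero] at h
    exact G.sum_degree_sq_le_of_charpoly_adjMatrix_eq h hG
  · exact (G.sum_degree_sq_eq_of_charpoly_Aalpha_eq hα h).le

theorem isRoot_charpoly_Aalpha_of_degree_eq {s : Set V} {r : ℕ} (hne : s.Nonempty)
    (hdeg : ∀ v ∈ s, G.degree v = r) (hs : ∀ v ∈ s, ∀ w, G.Adj v w → w ∈ s) :
    (Aalpha G α).charpoly.IsRoot r := by
  rw [Matrix.isRoot_charpoly_iff_exists_mulVec_eq_smul]
  refine ⟨s.indicator 1, fun h => ?_, ?_⟩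
  · obtain ⟨v, hv⟩ := hne
    simpa [hv] using congrFun h v
  ext v
  rw [Aalpha_mulVec_apply, Pi.smul_apply, smul_eq_mul]
  by_cases hv : v ∈ s
  · have hnbr : ∑ w ∈ G.neighborFinset v, s.indicator 1 w = (r : ℝ) := by
      rw [sum_congr rfl fun w hw =>
        Set.indicator_of_mem (hs v hv w ((mem_neighborFinset _ _ _).mp hw)) _]
      simp [hdeg v hv]
    rw [hnbr, Set.indicator_of_mem hv, hdeg v hv]
    simp only [Pi.one_apply]
    ring
  · have hnbr : ∑ w ∈ G.neighborFinset v, s.indicator (1 : V → ℝ) w = 0 :=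
      sum_eq_zero fun w hw => Set.indicator_of_notMem
        (fun hw' => hv (hs w hw' v ((mem_neighborFinset _ _ _).mp hw).symm)) _
    simp [hnbr, Set.indicator_of_notMem hv]

theorem degree_eq_of_eigenvector_apply_eq_max {r : ℕ} (hmax : ∀ v, G.degree v ≤ r) (hα : α < 1)
    {x : V → ℝ} (hx : Aalpha G α *ᵥ x = (r : ℝ) • x) {m : V} (hm : ∀ v, x v ≤ x m)
    (hpos : 0 < x m) {v : V} (hv : x v = x m) :
    G.degree v = r ∧ ∀ w, G.Adj v w → x w = x m := by
  have hrow := congrFun hx v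
  rw [Aalpha_mulVec_apply, Pi.smul_apply, smul_eq_mul, hv] at hrow
  have hsum : ∑ w ∈ G.neighborFinset v, x w ≤ ∑ w ∈ G.neighborFinset v, x m :=
    sum_le_sum fun w _ => hm w
  rw [sum_const, card_neighborFinset_eq_degree, nsmul_eq_mul] at hsum
  have hdeg : G.degree v = r := by
    refine le_antisymm (hmax v) ?_
    have := mul_le_mul_of_nonneg_left hsum (sub_nonneg.mpr hα.le)
    have : (r : ℝ) * x m ≤ G.degree v * x m := by linarith
    exact_mod_cast le_of_mul_le_mul_right this hpos
  refine ⟨hdeg, fun w hw => ?_⟩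
  rw [hdeg] at hrow hsum
  have heq : ∑ w ∈ G.neighborFinset v, x w = ∑ w ∈ G.neighborFinset v, x m := by
    rw [sum_const, card_neighborFinset_eq_degree, nsmul_eq_mul, hdeg]
    have h1α : (1 - α) ≠ 0 := by linarith
    exact mul_left_cancel₀ h1α (by linarith)
  exact (sum_eq_sum_iff_of_le fun w _ => hm w).mp heq w ((mem_neighborFinset _ _ _).mpr hw)

theorem not_isRoot_charpoly_Aalpha {r : ℕ} (hG : G.Preconnected) (hmax : ∀ v, G.degree v ≤ r)
    (hmin : ∃ v, G.degree v < r) (hα : α < 1) : ¬ (Aalpha G α).charpoly.IsRoot r := by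
  have hnonpos (x : V → ℝ) (hx : Aalpha G α *ᵥ x = (r : ℝ) • x) (v : V) : x v ≤ 0 := by
    by_contra! hv
    have : Nonempty V := ⟨v⟩
    obtain ⟨m, hm⟩ := Finite.exists_max x
    have hpos : 0 < x m := hv.trans_le (hm v)
    have hs : ∀ u ∈ {u | x u = x m}, ∀ w, G.Adj u w → w ∈ {u | x u = x m} := fun u hu =>
      (G.degree_eq_of_eigenvector_apply_eq_max hmax hα hx hm hpos hu).2
    obtain ⟨u, hu⟩ := hmin
    have := (G.degree_eq_of_eigenvector_apply_eq_max hmax hα hx hm hpos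
      ((hG m u).mem_of_forall_adj_mem hs rfl)).1
    omega
  rw [Matrix.isRoot_charpoly_iff_exists_mulVec_eq_smul]
  rintro ⟨x, hx0, hx⟩
  refine hx0 (funext fun v => le_antisymm (hnonpos x hx v) ?_)
  simpa using hnonpos (-x) (by rw [mulVec_neg, hx, smul_neg]) v

theorem exists_ne_reachable_odd_degree {u : V} (hu : Odd (G.degree u)) :
    ∃ w, w ≠ u ∧ G.Reachable u w ∧ Odd (G.degree w) := by
  set s := {w | G.Reachable u w}
  have hdeg (w : s) : (G.induce s).degree w = G.degree w :=
    degree_induce_of_neighborSet_subset fun y hy => w.2.trans hy.reachable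
  obtain ⟨w, hwu, hw⟩ := (G.induce s).exists_ne_odd_degree_of_exists_odd_degree ⟨u, .refl u⟩
    (by rwa [hdeg])
  exact ⟨w, fun h => hwu (Subtype.ext h), w.2, by rwa [← hdeg]⟩

variable {G} in
theorem Walk.IsPath.neighborSet_toSubgraph_eq {u v : V} {p : G.Walk u v} (hp : p.IsPath)
    (hnil : ¬ p.Nil) (hu : G.degree u ≤ 1) (hv : G.degree v ≤ 1) (hdeg : ∀ w, G.degree w ≤ 2)
    {x : V} (hx : x ∈ p.support) : p.toSubgraph.neighborSet x = G.neighborSet x := by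
  refine Set.eq_of_subset_of_ncard_le (p.toSubgraph.neighborSet_subset x) ?_ (Set.toFinite _)
  rw [← coe_neighborFinset, Set.ncard_coe_finset, card_neighborFinset_eq_degree]
  obtain ⟨i, rfl, hi⟩ := mem_support_iff_exists_getVert.mp hx
  rcases Nat.eq_zero_or_pos i with rfl | hi0
  · rw [getVert_zero, hp.neighborSet_toSubgraph_startpoint hnil, Set.ncard_singleton]
    exact hu
  rcases hi.eq_or_lt with rfl | hil
  · rw [getVert_length, hp.neighborSet_toSubgraph_endpoint hnil, Set.ncard_singleton]
    exact hv
  · rw [hp.ncard_neighborSet_toSubgraph_internal_eq_two hi0.ne' hil]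
    exact hdeg _

theorem nonempty_iso_pathGraph_of_degree {u v : V} (huv : u ≠ v) (hu : G.degree u = 1)
    (hv : G.degree v = 1) (hdeg : ∀ w, w ≠ u → w ≠ v → G.degree w = 2)
    (hcyc : ∀ s : Set V, s.Nonempty → (∀ w ∈ s, G.degree w = 2) →
      ¬ ∀ x ∈ s, ∀ y, G.Adj x y → y ∈ s) :
    Nonempty (G ≃g pathGraph (Fintype.card V)) := by
  have hmax (w : V) : G.degree w ≤ 2 := by
    by_cases hwu : w = u
    · rw [hwu, hu]; norm_num
    by_cases hwv : w = v
    · rw [hwv, hv]; norm_num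
    exact (hdeg w hwu hwv).le
  obtain ⟨w, hwu, hreach, hodd⟩ := G.exists_ne_reachable_odd_degree (u := u) (by simp [hu])
  obtain rfl : w = v := by
    by_contra hwv
    rw [hdeg w hwu hwv] at hodd
    exact Nat.not_odd_iff_even.mpr even_two hodd
  obtain ⟨p, hp⟩ := hreach.exists_isPath
  have hnbr (x : V) (hx : x ∈ p.support) :=
    hp.neighborSet_toSubgraph_eq (fun h => huv h.eq) hu.le hv.le hmax hx
  have hspan (x : V) : x ∈ p.support := by
    by_contra hx
    refine hcyc {x | x ∉ p.support} ⟨x, hx⟩ (fun y hy => hdeg y ?_ ?_) fun a ha b hab hb => ?_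
    · rintro rfl; exact hy p.start_mem_support
    · rintro rfl; exact hy p.end_mem_support
    have : a ∈ p.toSubgraph.neighborSet b := by rw [hnbr b hb]; exact hab.symm
    exact ha (p.mem_verts_toSubgraph.mp (p.toSubgraph.neighborSet_subset_verts b this))
  have htop : p.toSubgraph = ⊤ := by
    refine Subgraph.ext (Set.eq_univ_of_forall fun x => p.mem_verts_toSubgraph.mpr (hspan x)) ?_
    ext x y
    exact Set.ext_iff.mp (hnbr x (hspan x)) y
  have hlen : p.length + 1 = Fintype.card V := by
    have := Fintype.card_pos_iff.mpr ⟨u⟩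
    rw [(hp.isHamiltonian_of_mem hspan).length_eq]
    omega
  rw [← hlen]
  exact ⟨(hp.pathGraphIsoToSubgraph.trans (htop ▸ Subgraph.topIso)).symm⟩

theorem nonempty_iso_of_card_le_one {W : Type} [Fintype W] (H : SimpleGraph W)
    (hcard : Fintype.card V = Fintype.card W) (hW : Fintype.card W ≤ 1) : Nonempty (G ≃g H) := by
  refine ⟨⟨Fintype.equivOfCardEq hcard, fun {a b} => ?_⟩⟩
  obtain rfl := Fintype.card_le_one_iff.mp (hcard ▸ hW) a b
  simp

end Fintype

variable {m : ℕ}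

theorem pathGraph_degree_zero : (pathGraph (m + 2)).degree 0 = 1 := by
  rw [← card_neighborFinset_eq_degree, card_eq_one]
  refine ⟨⟨1, by omega⟩, ext fun j => ?_⟩
  simp only [mem_neighborFinset, mem_singleton, pathGraph_adj, Fin.ext_iff, Fin.val_zero]
  omega

theorem pathGraph_degree_last : (pathGraph (m + 2)).degree (Fin.last _) = 1 := by
  rw [← card_neighborFinset_eq_degree, card_eq_one]
  refine ⟨⟨m, by omega⟩, ext fun j => ?_⟩
  simp only [mem_neighborFinset, mem_singleton, pathGraph_adj, Fin.ext_iff, Fin.val_last]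
  omega

theorem pathGraph_degree_castSucc_succ (i : Fin m) :
    (pathGraph (m + 2)).degree i.castSucc.succ = 2 := by
  rw [← card_neighborFinset_eq_degree, card_eq_two]
  refine ⟨⟨i, by omega⟩, ⟨i + 2, by omega⟩, by simp [Fin.ext_iff], ext fun j => ?_⟩
  simp only [mem_neighborFinset, mem_insert, mem_singleton, pathGraph_adj, Fin.ext_iff,
    Fin.val_succ, Fin.val_castSucc]
  omega

theorem pathGraph_degree_le_two (i : Fin (m + 2)) : (pathGraph (m + 2)).degree i ≤ 2 := by
  induction i using Fin.cases with
  | zero => simp [pathGraph_degree_zero]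
  | succ k =>
    induction k using Fin.lastCases with
    | last => simp [Fin.succ_last, pathGraph_degree_last]
    | cast l => simp [pathGraph_degree_castSucc_succ]

theorem sum_degree_pathGraph : ∑ i, ((pathGraph (m + 2)).degree i : ℝ) = 2 * m + 2 := by
  rw [Fin.sum_univ_succ, Fin.sum_univ_castSucc, Fin.succ_last]
  simp only [pathGraph_degree_zero, pathGraph_degree_last, pathGraph_degree_castSucc_succ,
    sum_const, card_univ, Fintype.card_fin, nsmul_eq_mul]
  push_cast
  ring

theorem sum_degree_sq_pathGraph : ∑ i, ((pathGraph (m + 2)).degree i : ℝ) ^ 2 = 4 * m + 2 := by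
  rw [Fin.sum_univ_succ, Fin.sum_univ_castSucc, Fin.succ_last]
  simp only [pathGraph_degree_zero, pathGraph_degree_last, pathGraph_degree_castSucc_succ,
    sum_const, card_univ, Fintype.card_fin, nsmul_eq_mul]
  push_cast
  ring

theorem pathGraph_adjMatrix_mul_self_apply_le_one {n : ℕ} {i j : Fin n} (hij : i ≠ j) :
    ((pathGraph n).adjMatrix ℝ * (pathGraph n).adjMatrix ℝ) i j ≤ 1 := by
  have := Fin.val_ne_of_ne hij
  rw [adjMatrix_mul_self_apply, Nat.cast_le_one]
  refine card_le_one.mpr fun a ha b hb => ?_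
  simp only [mem_filter, mem_univ, true_and, pathGraph_adj] at ha hb
  omega

end SimpleGraph

theorem exists_pair_of_sum_eq_of_sum_sq_le {ι : Type} [Fintype ι] (d : ι → ℕ)
    (h1 : ∑ i, (d i : ℝ) = 2 * Fintype.card ι - 2)
    (h2 : ∑ i, (d i : ℝ) ^ 2 ≤ 4 * Fintype.card ι - 6) :
    ∃ u v, u ≠ v ∧ d u = 1 ∧ d v = 1 ∧ ∀ w, w ≠ u → w ≠ v → d w = 2 := by
  have hterm (i : ι) : 0 ≤ ((d i : ℝ) - 1) * (d i - 2) := by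
    rcases Nat.lt_or_ge (d i) 2 with h | h
    · have : (d i : ℝ) ≤ 1 := by exact_mod_cast Nat.le_of_lt_succ h
      exact mul_nonneg_of_nonpos_of_nonpos (by linarith) (by linarith)
    · have : (2 : ℝ) ≤ d i := by exact_mod_cast h
      exact mul_nonneg (by linarith) (by linarith)
  have hsum : ∑ i, ((d i : ℝ) - 1) * (d i - 2) = 0 := by
    refine le_antisymm ?_ (sum_nonneg fun i _ => hterm i)
    simp only [show ∀ x : ℝ, (x - 1) * (x - 2) = x ^ 2 - 3 * x + 2 from fun x => by ring,
      sum_add_distrib, sum_sub_distrib, ← mul_sum, sum_const, card_univ, nsmul_eq_mul]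
    linarith
  have hd (i : ι) : d i = 1 ∨ d i = 2 := by
    have := (sum_eq_zero_iff_of_nonneg fun i _ => hterm i).mp hsum i (mem_univ i)
    rcases mul_eq_zero.mp this with h | h
    · exact Or.inl (by exact_mod_cast sub_eq_zero.mp h)
    · exact Or.inr (by exact_mod_cast sub_eq_zero.mp h)
  have hcard : #{i | d i = 1} = 2 := by
    have hind (i : ι) : (2 : ℝ) - d i = if d i = 1 then 1 else 0 := by
      rcases hd i with h | h <;> norm_num [h]
    have : ∑ i, ((2 : ℝ) - d i) = 2 := by
      rw [sum_sub_distrib, h1]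
      simp only [sum_const, card_univ, nsmul_eq_mul]
      ring
    rw [sum_congr rfl fun i _ => hind i, sum_boole] at this
    exact_mod_cast this
  obtain ⟨u, v, huv, huv'⟩ := card_eq_two.mp hcard
  have hmem (w : ι) : d w = 1 ↔ w = u ∨ w = v := by
    simpa using Finset.ext_iff.mp huv' w
  refine ⟨u, v, huv, (hmem u).mpr (Or.inl rfl), (hmem v).mpr (Or.inr rfl), fun w hwu hwv => ?_⟩
  exact (hd w).resolve_left fun h => ((hmem w).mp h).elim hwu hwv

theorem path_determined_by_Aalpha_spectrum_general
    (α : ℝ) (hα1 : α < 1) (n : ℕ) :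
    IsDSAalpha (pathGraph n) α := by
  intro W _ H h
  have hcard : Fintype.card W = n := by simpa using congrArg natDegree h
  obtain hn | ⟨m, rfl⟩ : n < 2 ∨ ∃ m, n = m + 2 :=
    (Nat.lt_or_ge n 2).imp_right fun hn => ⟨n - 2, by omega⟩
  · exact nonempty_iso_of_card_le_one H _ (hcard.trans (Fintype.card_fin n).symm)
      ((Fintype.card_fin n).trans_le (by omega))
  have hsum : ∑ w, (H.degree w : ℝ) = 2 * Fintype.card W - 2 := by
    rw [sum_degree_eq_of_charpoly_Aalpha_eq _ h, sum_degree_pathGraph, hcard]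
    push_cast
    ring
  have hsq : ∑ w, (H.degree w : ℝ) ^ 2 ≤ 4 * Fintype.card W - 6 := by
    have := sum_degree_sq_le_of_charpoly_Aalpha_eq _ h
      fun _ _ => pathGraph_adjMatrix_mul_self_apply_le_one
    rw [sum_degree_sq_pathGraph] at this
    rw [hcard]
    push_cast
    linarith
  obtain ⟨u, v, huv, hu, hv, hw⟩ := exists_pair_of_sum_eq_of_sum_sq_le _ hsum hsq
  rw [← hcard]
  refine H.nonempty_iso_pathGraph_of_degree huv hu hv hw fun s hne hdeg hs => ?_
  have hroot := isRoot_charpoly_Aalpha_of_degree_eq H (α := α) hne hdeg hs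
  rw [h] at hroot
  exact not_isRoot_charpoly_Aalpha _ (pathGraph_preconnected _) pathGraph_degree_le_two
    ⟨0, by simp [pathGraph_degree_zero]⟩ hα1 hroot

theorem path_determined_by_Aalpha_spectrum
    (α : ℝ) (hα0 : 0 ≤ α) (hα1 : α < 1) (n : ℕ) (hn : 1 ≤ n) :
    IsDSAalpha (pathGraph n) α :=
  path_determined_by_Aalpha_spectrum_general α hα1 n
end

section
/- Let G_1 and G_2 be finite simple graphs on n_1 and n_2 vertices respectively, and let α be a real number. Then the characteristic polynomial of A_α(G_1 ∨ G_2) satisfies, for every real x not in the spectrum of A_α(G_1) shifted by αn_2 nor in the spectrum of A_α(G_2) shifted by αn_1: P_{A_α(G_1 ∨ G_2)}(x) = P_{A_α(G_1)}(x − αn_2) · P_{A_α(G_2)}(x − αn_1) · (1 − (1−α)² · Γ_{A_α(G_1)}(x − αn_2) · Γ_{A_α(G_2)}(x − αn_1)). -/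
open SimpleGraph Matrix Finset

attribute [local instance] Classical.propDecidable

/-!
Split the vertex set as `V ⊕ W`. Joining adds `|W|` to every degree in `G₁` and `|V|` to every
degree in `G₂`, so `xI − A_α(G₁ ∨ G₂)` has diagonal blocks `(x − α|W|)I − A_α(G₁)` and
`(x − α|V|)I − A_α(G₂)` and constant off-diagonal blocks `−(1 − α)J`. The Schur complement of
the first block is the second block minus `(1 − α)² Γ₁ J`, a rank-one perturbation, whose
determinant the matrix determinant lemma expresses through the second coronal `Γ₂`.
-/

namespace Matrix

variable {l m n o α : Type*} [Fintype m] [Fintype n]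

theorem of_const_mul_mul_of_const [NonUnitalSemiring α] (a b : α) (M : Matrix m n α) :
    (of fun (_ : l) (_ : m) => a) * M * (of fun (_ : n) (_ : o) => b) =
      of fun _ _ => a * (∑ i, ∑ j, M i j) * b := by
  ext i k
  simp only [mul_apply, of_apply, Finset.mul_sum, Finset.sum_mul]
  rw [Finset.sum_comm]

variable [DecidableEq m] [DecidableEq n] [CommRing α]

theorem eval_charpoly_eq_det_smul_one_sub (M : Matrix n n α) (t : α) :
    M.charpoly.eval t = (t • 1 - M).det := by
  rw [eval_charpoly, scalar_apply, smul_one_eq_diagonal]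

theorem det_sub_of_const {B : Matrix n n α} (hB : IsUnit B.det) (k : α) :
    (B - of fun _ _ => k).det = B.det * (1 - k * ∑ i, ∑ j, B⁻¹ i j) := by
  have hJ : -(of fun _ _ => k : Matrix n n α) =
      replicateCol Unit (fun _ => -k) * replicateRow Unit (fun _ => (1 : α)) := by
    ext; simp [mul_apply]
  rw [sub_eq_add_neg, hJ, det_add_replicateCol_mul_replicateRow hB, det_unique (n := Unit)]
  simp only [PUnit.default_eq_unit, Matrix.add_apply, one_apply_eq, mul_apply, replicateRow_apply,
    one_mul, replicateCol_apply, mul_neg, Finset.sum_neg_distrib, ← Finset.sum_mul]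
  rw [Finset.sum_comm]
  ring

theorem det_fromBlocks_of_const {A : Matrix m m α} {B : Matrix n n α} (hA : IsUnit A.det)
    (hB : IsUnit B.det) (c : α) :
    (fromBlocks A (of fun _ _ => c) (of fun _ _ => c) B).det =
      A.det * B.det * (1 - c ^ 2 * (∑ i, ∑ j, A⁻¹ i j) * ∑ i, ∑ j, B⁻¹ i j) := by
  let := A.invertibleOfIsUnitDet hA
  rw [det_fromBlocks₁₁, invOf_eq_nonsing_inv, of_const_mul_mul_of_const, det_sub_of_const hB]
  ring

end Matrix

section Join

variable {V W : Type} [Fintype V] [Fintype W] (G₁ : SimpleGraph V) (G₂ : SimpleGraph W)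

omit [Fintype V] [Fintype W] in
theorem adjMatrix_joinG (R : Type*) [Zero R] [One R] [DecidableRel G₁.Adj] [DecidableRel G₂.Adj]
    [DecidableRel (joinG G₁ G₂).Adj] :
    (joinG G₁ G₂).adjMatrix R =
      fromBlocks (G₁.adjMatrix R) (of fun _ _ => 1) (of fun _ _ => 1) (G₂.adjMatrix R) := by
  ext (i | i) (j | j) <;> simp only [adjMatrix_apply] <;> simp [joinG]

theorem neighborFinset_joinG_inl (v : V) :
    (joinG G₁ G₂).neighborFinset (.inl v) = (G₁.neighborFinset v).disjSum univ := by
  ext (w | w) <;> simp only [mem_neighborFinset] <;> simp [joinG]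

theorem neighborFinset_joinG_inr (w : W) :
    (joinG G₁ G₂).neighborFinset (.inr w) = univ.disjSum (G₂.neighborFinset w) := by
  ext (v | v) <;> simp only [mem_neighborFinset] <;> simp [joinG]

theorem degree_joinG_inl (v : V) :
    (joinG G₁ G₂).degree (.inl v) = G₁.degree v + Fintype.card W := by
  rw [← card_neighborFinset_eq_degree, neighborFinset_joinG_inl, card_disjSum,
    card_neighborFinset_eq_degree, card_univ]

theorem degree_joinG_inr (w : W) :
    (joinG G₁ G₂).degree (.inr w) = G₂.degree w + Fintype.card V := by
  rw [← card_neighborFinset_eq_degree, neighborFinset_joinG_inr, card_disjSum,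
    card_neighborFinset_eq_degree, card_univ, add_comm]

theorem Aalpha_joinG (α : ℝ) :
    Aalpha (joinG G₁ G₂) α =
      fromBlocks (Aalpha G₁ α + (α * Fintype.card W) • 1) (of fun _ _ => 1 - α)
        (of fun _ _ => 1 - α) (Aalpha G₂ α + (α * Fintype.card V) • 1) := by
  ext (i | i) (j | j) <;>
    simp only [Aalpha, adjMatrix_joinG, degree_joinG_inl, degree_joinG_inr, Matrix.add_apply,
      Matrix.smul_apply, diagonal_apply, one_apply, adjMatrix_apply, of_apply, fromBlocks_apply₁₁,
      fromBlocks_apply₁₂, fromBlocks_apply₂₁, fromBlocks_apply₂₂, Sum.inl.injEq, Sum.inr.injEq,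
      reduceCtorEq, if_false, smul_eq_mul, Nat.cast_add, mul_zero, zero_add, mul_one] <;>
    split_ifs <;> ring

theorem smul_one_sub_Aalpha_joinG (α x : ℝ) :
    x • 1 - Aalpha (joinG G₁ G₂) α =
      fromBlocks ((x - α * Fintype.card W) • 1 - Aalpha G₁ α) (of fun _ _ => -(1 - α))
        (of fun _ _ => -(1 - α)) ((x - α * Fintype.card V) • 1 - Aalpha G₂ α) := by
  ext (i | i) (j | j) <;>
    simp only [Aalpha_joinG, Matrix.add_apply, Matrix.sub_apply, Matrix.smul_apply, one_apply,
      of_apply, fromBlocks_apply₁₁, fromBlocks_apply₁₂, fromBlocks_apply₂₁, fromBlocks_apply₂₂,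
      Sum.inl.injEq, Sum.inr.injEq, reduceCtorEq, if_false, smul_eq_mul, mul_zero, zero_sub] <;>
    ring

end Join

theorem charpoly_Aalpha_join
    {V W : Type} [Fintype V] [Fintype W]
    (G₁ : SimpleGraph V) (G₂ : SimpleGraph W) (α x : ℝ)
    (h₁ : ¬ (Aalpha G₁ α).charpoly.IsRoot (x - α * Fintype.card W))
    (h₂ : ¬ (Aalpha G₂ α).charpoly.IsRoot (x - α * Fintype.card V)) :
    (Aalpha (joinG G₁ G₂) α).charpoly.eval x =
      (Aalpha G₁ α).charpoly.eval (x - α * Fintype.card W) *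
        (Aalpha G₂ α).charpoly.eval (x - α * Fintype.card V) *
        (1 - (1 - α) ^ 2 *
          coronal (Aalpha G₁ α) (x - α * Fintype.card W) *
          coronal (Aalpha G₂ α) (x - α * Fintype.card V)) := by
  simp only [Polynomial.IsRoot, eval_charpoly_eq_det_smul_one_sub] at h₁ h₂ ⊢
  rw [smul_one_sub_Aalpha_joinG, det_fromBlocks_of_const (isUnit_iff_ne_zero.mpr h₁)
    (isUnit_iff_ne_zero.mpr h₂), neg_sq]
  rfl
end
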